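/- arXiv:1807.01852 — 3 statements merged into one kernel-verified Lean document; each statement's English description precedes it below -/
import Mathlib

section
/- For any real number p and any q with 0 ≤ q ≤ 1, we have log(1 - q(1 - exp(p))) ≤ p·q + p²/8. -/
/-! `1 - q (1 - exp p)` is the moment generating function at `p` of a Bernoulli variable with
mean `q` and values in `[0, 1]`, so the inequality is Hoeffding's lemma for that variable. -/

open Real MeasureTheory ProbabilityTheory unitInterval

namespace ProbabilityTheory

lemma mgf_le_exp_of_mem_Icc {Ω : Type*} [MeasurableSpace Ω] {μ : Measure Ω}
    [IsProbabilityMeasure μ] {X : Ω → ℝ} {a b : ℝ} (hm : AEMeasurable X μ)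
    (hb : ∀ᵐ ω ∂μ, X ω ∈ Set.Icc a b) (t : ℝ) :
    mgf X μ t ≤ exp (t * μ[X] + (b - a) ^ 2 * t ^ 2 / 8) := by
  have h : mgf (fun ω ↦ X ω + -μ[X]) μ t ≤ _ := (hasSubgaussianMGF_of_mem_Icc hm hb).mgf_le t
  have hc : ((‖b - a‖₊ / 2) ^ 2 : NNReal) * t ^ 2 / 2 = (b - a) ^ 2 * t ^ 2 / 8 := by
    push_cast [coe_nnnorm, norm_eq_abs, div_pow, sq_abs]; ring
  rw [mgf_add_const, hc, ← le_div_iff₀ (exp_pos _), ← exp_sub] at h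
  exact h.trans_eq (congrArg exp (by ring))

lemma ae_mem_bernoulliMeasure {X : Type*} [MeasurableSpace X] [MeasurableSingletonClass X]
    {x y : X} {s : Set X} (hx : x ∈ s) (hy : y ∈ s) (p : I) : ∀ᵐ z ∂Ber(x, y, p), z ∈ s := by
  simp [bernoulliMeasure_def, ae_iff, hx, hy]

lemma mgf_id_bernoulliMeasure (x y : ℝ) (p : I) (t : ℝ) :
    mgf id Ber(x, y, p) t = p * exp (t * x) + (1 - p) * exp (t * y) := by
  simp [mgf, integral_bernoulliMeasure]

lemma integral_id_bernoulliMeasure (x y : ℝ) (p : I) :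
    ∫ z, z ∂Ber(x, y, p) = p * x + (1 - p) * y := by
  simp [integral_bernoulliMeasure]

end ProbabilityTheory

theorem log_one_sub_mul_one_sub_exp_le (p q : ℝ) (hq0 : 0 ≤ q) (hq1 : q ≤ 1) :
    Real.log (1 - q * (1 - Real.exp p)) ≤ p * q + p ^ 2 / 8 := by
  let μ := Ber((1 : ℝ), 0, ⟨q, hq0, hq1⟩)
  have hmgf : mgf id μ p = 1 - q * (1 - exp p) := by
    rw [mgf_id_bernoulliMeasure]
    simp only [mul_one, mul_zero, exp_zero]
    ring
  rw [← hmgf, log_le_iff_le_exp (mgf_pos (integrable_bernoulliMeasure ..))]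
  calc mgf id μ p ≤ exp (p * ∫ z, z ∂μ + (1 - 0) ^ 2 * p ^ 2 / 8) :=
        mgf_le_exp_of_mem_Icc measurable_id.aemeasurable
          (ae_mem_bernoulliMeasure (by simp) (by simp) _) p
    _ = exp (p * q + p ^ 2 / 8) := by rw [integral_id_bernoulliMeasure]; norm_num
end

section
/- Let A be a Hermitian matrix with 0 ≤ A ≤ I and let x, y ≥ 0 be real numbers. Then exp(x·A + y·(I − A)) ≤ exp(x)·A + exp(y)·(I − A) in the Loewner order, i.e. exp(x·A + y·(I−A)) ≤ exp(y)·I + (exp(x) − exp(y))·A. -/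
/-!
The spectrum of `A` lies in `[0, 1]`, and `exp (x • A + y • (1 - A))` is `A` fed through the
continuous functional calculus of the convex function `t ↦ exp (y + (x - y) t)`. On `[0, 1]` a
convex function lies below its chord, and the functional calculus is monotone, so the matrix lies
below the chord evaluated at `A`, which is `exp y • 1 + (exp x - exp y) • A`.
-/

open Matrix
open scoped ComplexOrder

lemma convexOn_exp_const_add_mul (a b : ℝ) :
    ConvexOn ℝ Set.univ (fun t => Real.exp (a + b * t)) := by
  have h : (fun t => Real.exp (a + b * t)) = Real.exp ∘ AffineMap.lineMap a (a + b) := by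
    ext t
    rw [Function.comp_apply, AffineMap.lineMap_apply_ring']
    ring_nf
  rw [h]
  exact convexOn_exp.comp_affineMap _

section CFC

variable {A : Type*} [Ring A] [StarRing A] [Algebra ℝ A] [TopologicalSpace A]
  [ContinuousFunctionalCalculus ℝ A IsSelfAdjoint]

lemma cfc_const_add_const_mul_id (r s : ℝ) (a : A) (ha : IsSelfAdjoint a := by cfc_tac) :
    cfc (fun t => r + s * t) a = r • 1 + s • a := by
  rw [cfc_const_add r (s * ·) a, cfc_const_mul_id s a, Algebra.algebraMap_eq_smul_one]

variable [PartialOrder A] [StarOrderedRing A] [NonnegSpectrumClass ℝ A]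

lemma spectrum_subset_Icc_of_nonneg_of_le_one {a : A} (ha₀ : 0 ≤ a) (ha₁ : a ≤ 1) :
    spectrum ℝ a ⊆ Set.Icc 0 1 := fun t ht =>
  ⟨spectrum_nonneg_of_nonneg ha₀ ht, (CFC.le_one_iff a).mp ha₁ t ht⟩

lemma cfc_le_chord {f : ℝ → ℝ} (hf : ConvexOn ℝ (Set.Icc 0 1) f)
    (hfc : ContinuousOn f (Set.Icc 0 1)) {a : A} (ha₀ : 0 ≤ a) (ha₁ : a ≤ 1) :
    cfc f a ≤ f 0 • 1 + (f 1 - f 0) • a := by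
  have hspec := spectrum_subset_Icc_of_nonneg_of_le_one ha₀ ha₁
  rw [← cfc_const_add_const_mul_id _ _ a (IsSelfAdjoint.of_nonneg ha₀)]
  refine cfc_mono (fun t ht => ?_) (hfc.mono hspec)
  obtain ⟨ht₀, ht₁⟩ := hspec ht
  have hchord := hf.2 (Set.left_mem_Icc.2 zero_le_one) (Set.right_mem_Icc.2 zero_le_one)
    (sub_nonneg.2 ht₁) ht₀ (sub_add_cancel 1 t)
  simp only [smul_eq_mul, mul_zero, mul_one, zero_add] at hchord
  linarith

end CFC

lemma NormedSpace.exp_cfc {A : Type*} [NormedRing A] [StarRing A] [NormedAlgebra ℝ A]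
    [ContinuousFunctionalCalculus ℝ A IsSelfAdjoint] [ContinuousMap.UniqueHom ℝ A]
    (f : ℝ → ℝ) (a : A) (hf : ContinuousOn f (spectrum ℝ a) := by cfc_cont_tac)
    (ha : IsSelfAdjoint a := by cfc_tac) :
    NormedSpace.exp (cfc f a) = cfc (fun t => Real.exp (f t)) a := by
  rw [cfc_comp' Real.exp f a, CFC.real_exp_eq_normedSpace_exp]

theorem matrix_exp_jensen_general {d : ℕ} (A : Matrix (Fin d) (Fin d) ℂ)
    (hA0 : A.PosSemidef) (hA1 : ((1 : Matrix (Fin d) (Fin d) ℂ) - A).PosSemidef)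
    (x y : ℝ) :
    (Real.exp y • (1 : Matrix (Fin d) (Fin d) ℂ) + (Real.exp x - Real.exp y) • A
      - NormedSpace.exp (x • A + y • ((1 : Matrix (Fin d) (Fin d) ℂ) - A))).PosSemidef := by
  -- The operator norm induces the usual topology, so `NormedSpace.exp` is unaffected.
  open scoped MatrixOrder Matrix.Norms.L2Operator in
  have hsa : IsSelfAdjoint A := hA0.isHermitian
  have harg : x • A + y • (1 - A) = cfc (fun t => y + (x - y) * t) A := by
    rw [cfc_const_add_const_mul_id y (x - y) A]
    module
  have hchord := cfc_le_chord
    ((convexOn_exp_const_add_mul y (x - y)).subset (Set.subset_univ _) (convex_Icc 0 1))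
    (by fun_prop) hA0.nonneg (Matrix.le_iff.2 hA1)
  rw [harg, NormedSpace.exp_cfc (fun t => y + (x - y) * t) A, ← Matrix.le_iff]
  simpa using hchord

/-- Operator Jensen inequality: for a Hermitian matrix `A` with `0 ≤ A ≤ I` and reals
`x, y ≥ 0`, we have `exp(x•A + y•(I−A)) ≤ exp(y)•I + (exp(x) − exp(y))•A` in the
Loewner order. -/
theorem matrix_exp_jensen {d : ℕ} (A : Matrix (Fin d) (Fin d) ℂ)
    (hA : A.IsHermitian) (hA0 : A.PosSemidef) (hA1 : ((1 : Matrix (Fin d) (Fin d) ℂ) - A).PosSemidef)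
    (x y : ℝ) (hx : 0 ≤ x) (hy : 0 ≤ y) :
    (Real.exp y • (1 : Matrix (Fin d) (Fin d) ℂ) + (Real.exp x - Real.exp y) • A
      - NormedSpace.exp (x • A + y • ((1 : Matrix (Fin d) (Fin d) ℂ) - A))).PosSemidef :=
  matrix_exp_jensen_general A hA0 hA1 x y
end

section
/- (Noisy loss expectation.) Let ρ, σ be d×d density matrices with σ independent of the measurement randomness. Let X be uniform over the d²−1 non-identity Paulis, and conditional on X let ŷ be a random variable with E[ŷ|X] = tr(ρX) and Var[ŷ|X] = (1 − tr(ρX)²)/N. Then E[(tr(σX) − ŷ)²] = (d/(d²−1))·(‖σ − ρ‖_F² + (d − ‖ρ‖_F²)/N). -/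
/-!
Conditioning on the Pauli `X`, the bias–variance decomposition splits the expected loss into
`(tr(σX) − tr(ρX))²` plus the variance `(1 − tr(ρX)²)/N`. The `d²` Paulis form an orthogonal basis
of the `d × d` matrices for the Hilbert–Schmidt inner product, each of squared norm `d`, so by
Parseval the sum of `tr(AX)²` over all of them is `d‖A‖_F²` for Hermitian `A`. Dropping the
identity removes `tr(A)²`, which is `0` for `A = σ − ρ` and `1` for `A = ρ`.
-/

open Matrix
open scoped ComplexOrder

/-- Squared Frobenius norm `‖A‖_F² = tr(AᴴA)`. -/
noncomputable def frobSq {d : ℕ} (A : Matrix (Fin d) (Fin d) ℂ) : ℝ :=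
  ((Aᴴ * A).trace).re

open Finset

lemma sum_mul_sub_sq_eq_sq_add_sum {ι R : Type*} [CommRing R] (s : Finset ι) {w x : ι → R}
    {m : R} (hw : ∑ i ∈ s, w i = 1) (hm : ∑ i ∈ s, w i * x i = m) (c : R) :
    ∑ i ∈ s, w i * (c - x i) ^ 2 = (c - m) ^ 2 + ∑ i ∈ s, w i * (x i - m) ^ 2 := by
  have hsplit : ∀ i ∈ s, w i * (c - x i) ^ 2
      = (c - m) ^ 2 * w i + w i * (x i - m) ^ 2 - 2 * (c - m) * (w i * x i - m * w i) :=
    fun i _ => by ring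
  rw [sum_congr rfl hsplit, sum_sub_distrib, sum_add_distrib, ← mul_sum, ← mul_sum,
    sum_sub_distrib, ← mul_sum, hw, hm]
  ring

lemma Fin.filter_val_ne_zero {m : ℕ} [NeZero m] :
    univ.filter (fun i : Fin m => (i : ℕ) ≠ 0) = univ.erase 0 := by
  rw [← filter_ne']
  simp only [ne_eq, Fin.val_eq_zero_iff]

section TraceOrthogonal

variable {n ι : Type*} [Fintype n] [Fintype ι] [DecidableEq ι] {U : ι → Matrix n n ℂ} {c : ℂ}

lemma trace_conjTranspose_mul_sum_smul
    (horth : ∀ i j, ((U i)ᴴ * U j).trace = if i = j then c else 0) (a : ι → ℂ) (j : ι) :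
    ((U j)ᴴ * ∑ i, a i • U i).trace = c * a j := by
  simp [Matrix.mul_sum, Matrix.trace_sum, horth, mul_comm]

lemma linearIndependent_of_trace_orthogonal (hc : c ≠ 0)
    (horth : ∀ i j, ((U i)ᴴ * U j).trace = if i = j then c else 0) :
    LinearIndependent ℂ U := by
  refine Fintype.linearIndependent_iff.mpr fun a ha j => ?_
  have := trace_conjTranspose_mul_sum_smul horth a j
  rw [ha, Matrix.mul_zero, Matrix.trace_zero] at this
  exact (mul_eq_zero.mp this.symm).resolve_left hc

lemma exists_sum_smul_eq_of_trace_orthogonal (hcard : Fintype.card ι = Fintype.card n ^ 2)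
    (hc : c ≠ 0) (horth : ∀ i j, ((U i)ᴴ * U j).trace = if i = j then c else 0)
    (A : Matrix n n ℂ) : ∃ a : ι → ℂ, ∑ i, a i • U i = A := by
  have hspan := (linearIndependent_of_trace_orthogonal hc horth).span_eq_top_of_card_eq_finrank'
    (by rw [hcard, Module.finrank_matrix, Module.finrank_self, sq, mul_one])
  exact (Submodule.mem_span_range_iff_exists_fun ℂ).mp (hspan ▸ Submodule.mem_top)

/-- Parseval's identity for an orthogonal basis of the Hilbert–Schmidt inner product. -/
lemma sum_star_mul_trace_conjTranspose_mul (hcard : Fintype.card ι = Fintype.card n ^ 2)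
    (hc : c ≠ 0) (horth : ∀ i j, ((U i)ᴴ * U j).trace = if i = j then c else 0)
    (A : Matrix n n ℂ) :
    ∑ i, star ((U i)ᴴ * A).trace * ((U i)ᴴ * A).trace = c * (Aᴴ * A).trace := by
  obtain ⟨a, ha⟩ := exists_sum_smul_eq_of_trace_orthogonal hcard hc horth A
  have hcoeff (i : ι) : ((U i)ᴴ * A).trace = c * a i :=
    ha ▸ trace_conjTranspose_mul_sum_smul horth a i
  have hnorm : (Aᴴ * A).trace = ∑ i, a i * star ((U i)ᴴ * A).trace := by
    nth_rewrite 2 [← ha]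
    simp only [Matrix.mul_sum, Matrix.mul_smul, Matrix.trace_sum, Matrix.trace_smul, smul_eq_mul,
      ← Matrix.trace_conjTranspose, Matrix.conjTranspose_mul, Matrix.conjTranspose_conjTranspose]
  rw [hnorm, mul_sum]
  refine sum_congr rfl fun i _ => ?_
  rw [hcoeff]
  ring

end TraceOrthogonal

lemma Matrix.IsHermitian.ofReal_re_trace_mul {n : Type*} [Fintype n] {A B : Matrix n n ℂ}
    (hA : A.IsHermitian) (hB : B.IsHermitian) : (((A * B).trace.re : ℝ) : ℂ) = (A * B).trace := by
  refine Complex.conj_eq_iff_re.mp ?_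
  change star (A * B).trace = _
  rw [← Matrix.trace_conjTranspose, Matrix.conjTranspose_mul, hA.eq, hB.eq, Matrix.trace_mul_comm]

lemma sum_re_trace_mul_sq_eq_frobSq {d : ℕ} (hd : 0 < d)
    (U : Fin (d ^ 2) → Matrix (Fin d) (Fin d) ℂ) (hherm : ∀ i, (U i)ᴴ = U i)
    (horth : ∀ i j, ((U i)ᴴ * U j).trace = if i = j then (d : ℂ) else 0)
    {A : Matrix (Fin d) (Fin d) ℂ} (hA : A.IsHermitian) :
    ∑ i, ((A * U i).trace.re) ^ 2 = d * frobSq A := by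
  have hparseval := sum_star_mul_trace_conjTranspose_mul (by simp) (by exact_mod_cast hd.ne')
    horth A
  have hterm (i : Fin (d ^ 2)) : ((U i)ᴴ * A).trace = ((A * U i).trace.re : ℂ) := by
    rw [hherm, Matrix.trace_mul_comm, hA.ofReal_re_trace_mul (hherm i)]
  simp only [hterm, Complex.star_def, Complex.conj_ofReal] at hparseval
  simpa [frobSq, sq] using congrArg Complex.re hparseval

lemma sum_filter_re_trace_mul_sq {d : ℕ} (hd : 0 < d)
    (U : Fin (d ^ 2) → Matrix (Fin d) (Fin d) ℂ)
    (hU0 : ∀ i : Fin (d ^ 2), (i : ℕ) = 0 → U i = 1) (hherm : ∀ i, (U i)ᴴ = U i)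
    (horth : ∀ i j, ((U i)ᴴ * U j).trace = if i = j then (d : ℂ) else 0)
    {A : Matrix (Fin d) (Fin d) ℂ} (hA : A.IsHermitian) :
    ∑ i ∈ univ.filter (fun i : Fin (d ^ 2) => (i : ℕ) ≠ 0), ((A * U i).trace.re) ^ 2
      = d * frobSq A - (A.trace.re) ^ 2 := by
  have : NeZero (d ^ 2) := ⟨by positivity⟩
  rw [Fin.filter_val_ne_zero, sum_erase_eq_sub (mem_univ 0),
    sum_re_trace_mul_sq_eq_frobSq hd U hherm horth hA, hU0 0 rfl, Matrix.mul_one]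

theorem expectation_loss_noisy_general {d : ℕ} (hd : 1 < d) (N : ℝ)
    (U : Fin (d ^ 2) → Matrix (Fin d) (Fin d) ℂ)
    (hU0 : ∀ i : Fin (d ^ 2), (i : ℕ) = 0 → U i = 1)
    (hherm : ∀ i, (U i)ᴴ = U i)
    (horth : ∀ i j, ((U i)ᴴ * U j).trace = if i = j then (d : ℂ) else 0)
    (ρ σ : Matrix (Fin d) (Fin d) ℂ)
    (hρ : ρ.PosSemidef) (hρtr : ρ.trace = 1)
    (hσ : σ.PosSemidef) (hσtr : σ.trace = 1)
    -- finite noise model for the outcome `ŷ` conditional on the measurement `U i`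
    (V : Type*) [Fintype V]
    (w : Fin (d ^ 2) → V → ℝ) (val : Fin (d ^ 2) → V → ℝ)
    (hw1 : ∀ i, ∑ v, w i v = 1)
    (hmean : ∀ i : Fin (d ^ 2), (i : ℕ) ≠ 0 →
      ∑ v, w i v * val i v = ((ρ * U i).trace).re)
    (hvar : ∀ i : Fin (d ^ 2), (i : ℕ) ≠ 0 →
      ∑ v, w i v * (val i v - ((ρ * U i).trace).re) ^ 2
        = (1 - (((ρ * U i).trace).re) ^ 2) / N) :
    ((d : ℝ) ^ 2 - 1)⁻¹ *
        ∑ i ∈ Finset.univ.filter (fun i : Fin (d ^ 2) => (i : ℕ) ≠ 0),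
          ∑ v, w i v * (((σ * U i).trace).re - val i v) ^ 2
      = ((d : ℝ) / ((d : ℝ) ^ 2 - 1)) * (frobSq (σ - ρ) + ((d : ℝ) - frobSq ρ) / N) := by
  have hd0 : 0 < d := by omega
  have : NeZero (d ^ 2) := ⟨by positivity⟩
  have hcond : ∀ i ∈ univ.filter (fun i : Fin (d ^ 2) => (i : ℕ) ≠ 0),
      ∑ v, w i v * (((σ * U i).trace).re - val i v) ^ 2
        = (((σ - ρ) * U i).trace.re) ^ 2 + (1 - ((ρ * U i).trace.re) ^ 2) / N := by
    intro i hi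
    have hi := (mem_filter.mp hi).2
    rw [sum_mul_sub_sq_eq_sq_add_sum _ (hw1 i) (hmean i hi), hvar i hi, Matrix.sub_mul,
      trace_sub, Complex.sub_re]
  have hcard : ((univ.filter (fun i : Fin (d ^ 2) => (i : ℕ) ≠ 0)).card : ℝ) = d ^ 2 - 1 := by
    rw [Fin.filter_val_ne_zero, card_erase_of_mem (mem_univ _), card_univ, Fintype.card_fin,
      Nat.cast_pred (by positivity), Nat.cast_pow]
  have hd2 : (d : ℝ) ^ 2 - 1 ≠ 0 := by
    have : (2 : ℝ) ≤ d := by exact_mod_cast hd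
    nlinarith
  rw [sum_congr rfl hcond, sum_add_distrib, ← sum_div, sum_sub_distrib, sum_const, nsmul_eq_mul,
    mul_one, hcard, sum_filter_re_trace_mul_sq hd0 U hU0 hherm horth (hσ.1.sub hρ.1),
    sum_filter_re_trace_mul_sq hd0 U hU0 hherm horth hρ.1, trace_sub, hσtr, hρtr, sub_self,
    Complex.zero_re, Complex.one_re]
  field_simp
  ring

/-- Noisy loss expectation: with `X` uniform over the non-identity Paulis and, given `X`,
`ŷ` with mean `tr(ρX)` and variance `(1 − tr(ρX)²)/N`, one has
`E[(tr(σX) − ŷ)²] = (d/(d²−1))·(‖σ − ρ‖_F² + (d − ‖ρ‖_F²)/N)`. -/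
theorem expectation_loss_noisy {d : ℕ} (hd : 1 < d) (N : ℝ) (hN : 0 < N)
    (U : Fin (d ^ 2) → Matrix (Fin d) (Fin d) ℂ)
    (hU0 : ∀ i : Fin (d ^ 2), (i : ℕ) = 0 → U i = 1)
    (hherm : ∀ i, (U i)ᴴ = U i)
    (hunitary : ∀ i, (U i)ᴴ * U i = 1)
    (horth : ∀ i j, ((U i)ᴴ * U j).trace = if i = j then (d : ℂ) else 0)
    (ρ σ : Matrix (Fin d) (Fin d) ℂ)
    (hρ : ρ.PosSemidef) (hρtr : ρ.trace = 1)
    (hσ : σ.PosSemidef) (hσtr : σ.trace = 1)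
    -- finite noise model for the outcome `ŷ` conditional on the measurement `U i`
    (V : Type*) [Fintype V]
    (w : Fin (d ^ 2) → V → ℝ) (val : Fin (d ^ 2) → V → ℝ)
    (hw0 : ∀ i v, 0 ≤ w i v)
    (hw1 : ∀ i, ∑ v, w i v = 1)
    (hmean : ∀ i : Fin (d ^ 2), (i : ℕ) ≠ 0 →
      ∑ v, w i v * val i v = ((ρ * U i).trace).re)
    (hvar : ∀ i : Fin (d ^ 2), (i : ℕ) ≠ 0 →
      ∑ v, w i v * (val i v - ((ρ * U i).trace).re) ^ 2
        = (1 - (((ρ * U i).trace).re) ^ 2) / N) :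
    ((d : ℝ) ^ 2 - 1)⁻¹ *
        ∑ i ∈ Finset.univ.filter (fun i : Fin (d ^ 2) => (i : ℕ) ≠ 0),
          ∑ v, w i v * (((σ * U i).trace).re - val i v) ^ 2
      = ((d : ℝ) / ((d : ℝ) ^ 2 - 1)) * (frobSq (σ - ρ) + ((d : ℝ) - frobSq ρ) / N) :=
  expectation_loss_noisy_general hd N U hU0 hherm horth ρ σ hρ hρtr hσ hσtr V w val hw1 hmean hvar
end
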